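/- Define Φ_n(λ, μ) = det( a^{(n)} + (a^{(n)})ᵀ + b^{(n)} + (b^{(n)})ᵀ − (μ/2)·(a^{(n)} (b^{(n)})ᵀ + b^{(n)} (a^{(n)})ᵀ) − λ·Id ), a polynomial function of real λ, μ. Then for all n ≥ 0 and all real λ ≠ μ, the recursion Φ_{n+1}(λ, μ) = (μ − λ)^{2^n} · Φ_n( (2 − λ² + μ²)/(μ − λ), −2/(μ − λ) ) holds. -/
import Mathlib


open Matrix

/-- Equivalence identifying `Fin (2^n) ⊕ Fin (2^n)` with `Fin (2^(n+1))`. -/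
def blockEquiv (n : ℕ) : Fin (2 ^ n) ⊕ Fin (2 ^ n) ≃ Fin (2 ^ (n + 1)) :=
  finSumFinEquiv.trans (finCongr (by rw [pow_succ, mul_two]))

/-- Assemble a `2^(n+1) × 2^(n+1)` matrix from four `2^n × 2^n` blocks. -/
noncomputable def mkBlock {n : ℕ} (A B C D : Matrix (Fin (2 ^ n)) (Fin (2 ^ n)) ℝ) :
    Matrix (Fin (2 ^ (n + 1))) (Fin (2 ^ (n + 1))) ℝ :=
  Matrix.reindex (blockEquiv n) (blockEquiv n) (Matrix.fromBlocks A B C D)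

/-- The pair of BBS translation generators. -/
noncomputable def abB : (n : ℕ) →
    Matrix (Fin (2 ^ n)) (Fin (2 ^ n)) ℝ × Matrix (Fin (2 ^ n)) (Fin (2 ^ n)) ℝ
  | 0 => (1, 1)
  | n + 1 => (mkBlock (abB n).1 (abB n).2 0 0, mkBlock 0 0 (abB n).1 (abB n).2)

noncomputable def aB (n : ℕ) : Matrix (Fin (2 ^ n)) (Fin (2 ^ n)) ℝ := (abB n).1
noncomputable def bB (n : ℕ) : Matrix (Fin (2 ^ n)) (Fin (2 ^ n)) ℝ := (abB n).2

/-- The pair of lamplighter generators. -/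
noncomputable def abL : (n : ℕ) →
    Matrix (Fin (2 ^ n)) (Fin (2 ^ n)) ℝ × Matrix (Fin (2 ^ n)) (Fin (2 ^ n)) ℝ
  | 0 => (1, 1)
  | n + 1 => (mkBlock 0 (abL n).2 (abL n).1 0, mkBlock (abL n).1 0 0 (abL n).2)

noncomputable def aL (n : ℕ) : Matrix (Fin (2 ^ n)) (Fin (2 ^ n)) ℝ := (abL n).1
noncomputable def bL (n : ℕ) : Matrix (Fin (2 ^ n)) (Fin (2 ^ n)) ℝ := (abL n).2

/-- The BBS translation transition operator. -/
noncomputable def MB (n : ℕ) : Matrix (Fin (2 ^ n)) (Fin (2 ^ n)) ℝ :=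
  (1 / 4 : ℝ) • (aB n + (aB n)ᵀ + bB n + (bB n)ᵀ)

/-- The lamplighter transition operator. -/
noncomputable def ML (n : ℕ) : Matrix (Fin (2 ^ n)) (Fin (2 ^ n)) ℝ :=
  (1 / 4 : ℝ) • (aL n + (aL n)ᵀ + bL n + (bL n)ᵀ)

/-- The determinant `Φₙ(λ, μ)`. -/
noncomputable def Phi (n : ℕ) (lam mu : ℝ) : ℝ :=
  Matrix.det (aB n + (aB n)ᵀ + bB n + (bB n)ᵀ
    - (mu / 2) • (aB n * (bB n)ᵀ + bB n * (aB n)ᵀ)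
    - lam • (1 : Matrix (Fin (2 ^ n)) (Fin (2 ^ n)) ℝ))

lemma mkBlock_eq {n : ℕ} (A B C D : Matrix (Fin (2 ^ n)) (Fin (2 ^ n)) ℝ) :
    mkBlock A B C D
      = Matrix.reindexAlgEquiv ℝ ℝ (blockEquiv n) (Matrix.fromBlocks A B C D) := rfl

lemma aB_succ (n : ℕ) : aB (n + 1) = mkBlock (aB n) (bB n) 0 0 := rfl

lemma bB_succ (n : ℕ) : bB (n + 1) = mkBlock 0 0 (aB n) (bB n) := rfl

lemma reindexAlgEquiv_transpose {n : ℕ}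
    (M : Matrix (Fin (2 ^ n) ⊕ Fin (2 ^ n)) (Fin (2 ^ n) ⊕ Fin (2 ^ n)) ℝ) :
    (Matrix.reindexAlgEquiv ℝ ℝ (blockEquiv n) M)ᵀ
      = Matrix.reindexAlgEquiv ℝ ℝ (blockEquiv n) Mᵀ := by
  simp [Matrix.transpose_reindex]

/-- The key identity `a aᵀ + b bᵀ = 2·Id`. -/
lemma keyS : ∀ n : ℕ, aB n * (aB n)ᵀ + bB n * (bB n)ᵀ
    = (2 : ℝ) • (1 : Matrix (Fin (2 ^ n)) (Fin (2 ^ n)) ℝ)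
  | 0 => by
      show (abB 0).1 * (abB 0).1ᵀ + (abB 0).2 * (abB 0).2ᵀ = _
      simp [abB]
      norm_num [two_smul]
  | n + 1 => by
      have ih := keyS n
      rw [aB_succ, bB_succ, mkBlock_eq, mkBlock_eq,
        reindexAlgEquiv_transpose, reindexAlgEquiv_transpose, ← _root_.map_mul, ← _root_.map_mul, ← _root_.map_add]
      have : (2 : ℝ) • (1 : Matrix (Fin (2 ^ (n + 1))) (Fin (2 ^ (n + 1))) ℝ)
          = Matrix.reindexAlgEquiv ℝ ℝ (blockEquiv n) ((2 : ℝ) • 1) := by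
        rw [_root_.map_smul, _root_.map_one]
      rw [this]
      congr 1
      simp [Matrix.fromBlocks_transpose, Matrix.fromBlocks_multiply, Matrix.fromBlocks_add,
        Matrix.fromBlocks_smul, ih, ← Matrix.fromBlocks_one]

/-- The recursion
`Φ_{n+1}(λ, μ) = (μ − λ)^{2ⁿ} · Φₙ((2 − λ² + μ²)/(μ − λ), −2/(μ − λ))`
holds for all `n ≥ 0` and all real `λ ≠ μ`. -/
theorem Phi_recursion (n : ℕ) (lam mu : ℝ) (h : lam ≠ mu) :
    Phi (n + 1) lam mu
      = (mu - lam) ^ (2 ^ n) * Phi n ((2 - lam ^ 2 + mu ^ 2) / (mu - lam)) (-2 / (mu - lam)) := by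
  have hne : mu - lam ≠ 0 := sub_ne_zero.mpr (Ne.symm h)
  have hc : (2 : ℝ) * (mu - lam) ≠ 0 := mul_ne_zero two_ne_zero hne
  have hkey := keyS n
  have hbb : bB n * (bB n)ᵀ = (2 : ℝ) • 1 - aB n * (aB n)ᵀ := by rw [← hkey]; abel
  have step1 : Phi (n + 1) lam mu = Matrix.det (Matrix.fromBlocks
      (aB n + (aB n)ᵀ - lam • 1) (bB n + (aB n)ᵀ - mu • 1)
      (aB n + (bB n)ᵀ - mu • 1) (bB n + (bB n)ᵀ - lam • 1)
      : Matrix (Fin (2 ^ n) ⊕ Fin (2 ^ n)) (Fin (2 ^ n) ⊕ Fin (2 ^ n)) ℝ) := by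
    unfold Phi
    rw [aB_succ, bB_succ, mkBlock_eq, mkBlock_eq, reindexAlgEquiv_transpose,
      reindexAlgEquiv_transpose,
      ← Matrix.det_reindexAlgEquiv (R := ℝ) ℝ ((blockEquiv n).symm)]
    refine congrArg (Matrix.det (R := ℝ) (n := Fin (2 ^ n) ⊕ Fin (2 ^ n))) ?_
    simp only [_root_.map_sub, _root_.map_add, _root_.map_smul, _root_.map_mul, _root_.map_one]
    simp only [show ∀ M : Matrix (Fin (2 ^ n) ⊕ Fin (2 ^ n)) (Fin (2 ^ n) ⊕ Fin (2 ^ n)) ℝ,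
        Matrix.reindexAlgEquiv ℝ ℝ ((blockEquiv n).symm)
          (Matrix.reindexAlgEquiv ℝ ℝ (blockEquiv n) M) = M from fun M => by simp]
    rw [show (1 : Matrix (Fin (2 ^ n) ⊕ Fin (2 ^ n)) (Fin (2 ^ n) ⊕ Fin (2 ^ n)) ℝ)
        = Matrix.fromBlocks 1 0 0 1 from Matrix.fromBlocks_one.symm]
    simp only [Matrix.fromBlocks_transpose, Matrix.fromBlocks_multiply, Matrix.fromBlocks_add,
      Matrix.fromBlocks_smul, sub_eq_add_neg, Matrix.fromBlocks_neg,
      Matrix.transpose_zero, Matrix.mul_zero, Matrix.zero_mul, smul_zero, neg_zero,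
      add_zero, zero_add, hkey]
    rw [Matrix.fromBlocks_inj]
    refine ⟨by module, by module, by module, by module⟩
  have hL : Matrix.det (Matrix.fromBlocks (1 : Matrix (Fin (2 ^ n)) (Fin (2 ^ n)) ℝ) 0 (-1) 1
      : Matrix (Fin (2 ^ n) ⊕ Fin (2 ^ n)) (Fin (2 ^ n) ⊕ Fin (2 ^ n)) ℝ)
      = 1 := by rw [Matrix.det_fromBlocks_zero₁₂]; simp
  have hU : Matrix.det (Matrix.fromBlocks (1 : Matrix (Fin (2 ^ n)) (Fin (2 ^ n)) ℝ) (-1) 0 1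
      : Matrix (Fin (2 ^ n) ⊕ Fin (2 ^ n)) (Fin (2 ^ n) ⊕ Fin (2 ^ n)) ℝ)
      = 1 := by rw [Matrix.det_fromBlocks_zero₂₁]; simp
  have hprod : (Matrix.fromBlocks (1 : Matrix (Fin (2 ^ n)) (Fin (2 ^ n)) ℝ) 0 (-1) 1
        : Matrix (Fin (2 ^ n) ⊕ Fin (2 ^ n)) (Fin (2 ^ n) ⊕ Fin (2 ^ n)) ℝ)
        * Matrix.fromBlocks (aB n + (aB n)ᵀ - lam • 1) (bB n + (aB n)ᵀ - mu • 1)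
          (aB n + (bB n)ᵀ - mu • 1) (bB n + (bB n)ᵀ - lam • 1)
        * Matrix.fromBlocks 1 (-1) 0 1
      = Matrix.fromBlocks (aB n + (aB n)ᵀ - lam • 1)
          (bB n - aB n + (lam - mu) • 1) ((bB n)ᵀ - (aB n)ᵀ + (lam - mu) • 1)
          ((2 * (mu - lam)) • 1) := by
    simp only [Matrix.fromBlocks_multiply, neg_mul, mul_neg, one_mul, mul_one, zero_mul,
      mul_zero, add_zero, zero_add, neg_neg]
    rw [Matrix.fromBlocks_inj]
    refine ⟨by module, by module, by module, by module⟩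
  have step2 : Matrix.det (Matrix.fromBlocks
        (aB n + (aB n)ᵀ - lam • 1) (bB n + (aB n)ᵀ - mu • 1)
        (aB n + (bB n)ᵀ - mu • 1) (bB n + (bB n)ᵀ - lam • 1)
        : Matrix (Fin (2 ^ n) ⊕ Fin (2 ^ n)) (Fin (2 ^ n) ⊕ Fin (2 ^ n)) ℝ)
      = Matrix.det (Matrix.fromBlocks (aB n + (aB n)ᵀ - lam • 1)
          (bB n - aB n + (lam - mu) • 1) ((bB n)ᵀ - (aB n)ᵀ + (lam - mu) • 1)
          ((2 * (mu - lam)) • 1)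
        : Matrix (Fin (2 ^ n) ⊕ Fin (2 ^ n)) (Fin (2 ^ n) ⊕ Fin (2 ^ n)) ℝ) := by
    rw [← hprod, Matrix.det_mul, Matrix.det_mul, hL, hU, one_mul, mul_one]
  haveI hInv : Invertible ((2 * (mu - lam)) • (1 : Matrix (Fin (2 ^ n)) (Fin (2 ^ n)) ℝ)) :=
    ⟨(2 * (mu - lam))⁻¹ • 1,
      by rw [smul_mul_smul_comm, inv_mul_cancel₀ hc, one_smul, one_mul],
      by rw [smul_mul_smul_comm, mul_inv_cancel₀ hc, one_smul, one_mul]⟩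
  have hinvOf : ⅟((2 * (mu - lam)) • (1 : Matrix (Fin (2 ^ n)) (Fin (2 ^ n)) ℝ))
      = (2 * (mu - lam))⁻¹ • 1 := by
    rw [Matrix.invOf_eq_nonsing_inv]
    apply Matrix.inv_eq_right_inv
    rw [smul_mul_smul_comm, mul_inv_cancel₀ hc, one_smul, one_mul]
  have step3 := Matrix.det_fromBlocks₂₂ (aB n + (aB n)ᵀ - lam • 1)
      (bB n - aB n + (lam - mu) • 1) ((bB n)ᵀ - (aB n)ᵀ + (lam - mu) • 1)
      ((2 * (mu - lam)) • (1 : Matrix (Fin (2 ^ n)) (Fin (2 ^ n)) ℝ))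
  rw [hinvOf] at step3
  have e1 : ∀ (c : ℝ) (X : Matrix (Fin (2 ^ n)) (Fin (2 ^ n)) ℝ),
      Matrix.det (c • X) = c ^ (2 ^ n) * Matrix.det X := fun c X => by
    rw [Matrix.det_smul, Fintype.card_fin]
  have h1 : (mu - lam) * ((2 - lam ^ 2 + mu ^ 2) / (mu - lam)) = 2 - lam ^ 2 + mu ^ 2 := by
    field_simp
  have h2 : (mu - lam) * (-2 / (mu - lam) / 2) = -1 := by
    field_simp
  have final : (2 * (mu - lam)) • (aB n + (aB n)ᵀ - lam • 1
        - (bB n - aB n + (lam - mu) • 1) * (2 * (mu - lam))⁻¹ • 1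
          * ((bB n)ᵀ - (aB n)ᵀ + (lam - mu) • 1))
      = (mu - lam) • (aB n + (aB n)ᵀ + bB n + (bB n)ᵀ
          - (-2 / (mu - lam) / 2) • (aB n * (bB n)ᵀ + bB n * (aB n)ᵀ)
          - ((2 - lam ^ 2 + mu ^ 2) / (mu - lam)) • 1) := by
    have hmid : (bB n - aB n + (lam - mu) • 1) * (2 * (mu - lam))⁻¹ • 1
          * ((bB n)ᵀ - (aB n)ᵀ + (lam - mu) • 1)
        = (2 * (mu - lam))⁻¹ • ((bB n - aB n + (lam - mu) • 1)
          * ((bB n)ᵀ - (aB n)ᵀ + (lam - mu) • 1)) := by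
      rw [mul_smul_comm, mul_one, smul_mul_assoc]
    conv_lhs => rw [hmid, smul_sub, smul_smul, mul_inv_cancel₀ hc, one_smul]
    conv_rhs => rw [smul_sub, smul_sub, smul_smul, smul_smul, h1, h2]
    simp only [sub_mul, add_mul, mul_sub, mul_add, smul_mul_assoc, mul_smul_comm,
      Matrix.mul_one, Matrix.one_mul, hbb]
    module
  rw [step1, step2, step3, e1, Matrix.det_one, mul_one]
  unfold Phi
  rw [← e1, ← e1, final]
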